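/- A labelling Lab is a complete labelling of Γ if and only if there exists a complete extension T of Γ with Lab = Ext2Lab(T); moreover this correspondence T ↦ Ext2Lab(T) is a bijection between complete extensions and complete labellings. -/

import Mathlib

variable {α : Type*}

inductive Label | IN | OUT | UNDEC
deriving DecidableEq

def conflictFree (att : α → α → Prop) (T : Set α) : Prop :=
  ∀ a ∈ T, ∀ b ∈ T, ¬ att a b

def acceptable (att : α → α → Prop) (T : Set α) (a : α) : Prop :=
  ∀ b, att b a → ∃ c ∈ T, att c b

def admissible (att : α → α → Prop) (T : Set α) : Prop :=
  conflictFree att T ∧ ∀ a ∈ T, acceptable att T a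

def complete (att : α → α → Prop) (T : Set α) : Prop :=
  admissible att T ∧ ∀ a, acceptable att T a → a ∈ T

def completeLab (att : α → α → Prop) (Lab : α → Label) : Prop :=
  (∀ a, Lab a = Label.IN ↔ ∀ b, att b a → Lab b = Label.OUT) ∧
  (∀ a, Lab a = Label.OUT ↔ ∃ b, att b a ∧ Lab b = Label.IN)

open Classical in
noncomputable def ext2Lab (att : α → α → Prop) (T : Set α) (a : α) : Label :=
  if a ∈ T then Label.IN
  else if ∃ b ∈ T, att b a then Label.OUT
  else Label.UNDEC

/-! The inverse of `ext2Lab` on complete labellings is `Lab ↦ {a | Lab a = IN}`. For a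
conflict-free `T`, `ext2Lab att T` labels `a` OUT exactly when `a` is attacked by `T`, so
"every attacker is OUT" becomes acceptability w.r.t. `T`, and the two labelling conditions
become admissibility and completeness of `T`. -/

theorem Label.eq_of_eq_IN_iff_of_eq_OUT_iff {x y : Label} (hIN : x = Label.IN ↔ y = Label.IN)
    (hOUT : x = Label.OUT ↔ y = Label.OUT) : x = y := by
  cases x <;> cases y <;> simp_all

section

variable {att : α → α → Prop}

theorem ext2Lab_eq_IN_iff {T : Set α} {a : α} : ext2Lab att T a = Label.IN ↔ a ∈ T := by
  unfold ext2Lab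
  split_ifs <;> simp_all

theorem ext2Lab_eq_OUT_iff {T : Set α} (hT : conflictFree att T) {a : α} :
    ext2Lab att T a = Label.OUT ↔ ∃ b ∈ T, att b a := by
  unfold ext2Lab
  split_ifs with ha hatt
  · simp only [false_iff, not_exists, not_and]
    exact fun b hb hba => hT b hb a ha hba
  · simpa using hatt
  · simpa using hatt

theorem acceptable_iff_forall_ext2Lab_eq_OUT {T : Set α} (hT : conflictFree att T) {a : α} :
    acceptable att T a ↔ ∀ b, att b a → ext2Lab att T b = Label.OUT := by
  simp only [acceptable, ext2Lab_eq_OUT_iff hT]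

theorem acceptable_iff_of_completeLab {Lab : α → Label} (hLab : completeLab att Lab) {a : α} :
    acceptable att {b | Lab b = Label.IN} a ↔ Lab a = Label.IN := by
  simp only [acceptable, hLab.1 a, hLab.2, Set.mem_ofPred_eq, and_comm]

theorem completeLab_ext2Lab {T : Set α} (hT : complete att T) : completeLab att (ext2Lab att T) := by
  obtain ⟨⟨hcf, hacc⟩, hcompl⟩ := hT
  refine ⟨fun a => ?_, fun a => ?_⟩
  · rw [ext2Lab_eq_IN_iff, ← acceptable_iff_forall_ext2Lab_eq_OUT hcf]
    exact ⟨hacc a, hcompl a⟩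
  · simp only [ext2Lab_eq_OUT_iff hcf, ext2Lab_eq_IN_iff, and_comm]

theorem complete_of_completeLab {Lab : α → Label} (hLab : completeLab att Lab) :
    complete att {a | Lab a = Label.IN} := by
  have hcf : conflictFree att {a | Lab a = Label.IN} := fun a ha b hb hab => by
    have hOUT := (hLab.1 b).mp hb a hab
    simp_all
  exact ⟨⟨hcf, fun a ha => (acceptable_iff_of_completeLab hLab).mpr ha⟩,
    fun a ha => (acceptable_iff_of_completeLab hLab).mp ha⟩

theorem ext2Lab_of_completeLab {Lab : α → Label} (hLab : completeLab att Lab) :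
    ext2Lab att {a | Lab a = Label.IN} = Lab := by
  have hcf := (complete_of_completeLab hLab).1.1
  funext a
  refine Label.eq_of_eq_IN_iff_of_eq_OUT_iff ext2Lab_eq_IN_iff ?_
  simp only [ext2Lab_eq_OUT_iff hcf, hLab.2 a, Set.mem_ofPred_eq, and_comm]

theorem ext2Lab_injective : Function.Injective (ext2Lab att) := fun T₁ T₂ h =>
  Set.ext fun a => by rw [← ext2Lab_eq_IN_iff, ← ext2Lab_eq_IN_iff, h]

end

theorem completeLab_iff_ext2Lab (att : α → α → Prop) :
    (∀ Lab : α → Label, completeLab att Lab ↔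
        ∃ T : Set α, complete att T ∧ Lab = ext2Lab att T) ∧
    Set.BijOn (ext2Lab att) {T : Set α | complete att T}
      {Lab : α → Label | completeLab att Lab} := by
  have hcorr : ∀ Lab : α → Label, completeLab att Lab ↔
      ∃ T : Set α, complete att T ∧ Lab = ext2Lab att T := fun Lab =>
    ⟨fun h => ⟨_, complete_of_completeLab h, (ext2Lab_of_completeLab h).symm⟩,
      fun ⟨_, hT, hLab⟩ => hLab ▸ completeLab_ext2Lab hT⟩
  exact ⟨hcorr, fun _ => completeLab_ext2Lab, ext2Lab_injective.injOn,
    fun _ hLab => ⟨_, complete_of_completeLab hLab, ext2Lab_of_completeLab hLab⟩⟩
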